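/- arXiv:2311.04771 — 3 statements merged into one kernel-verified Lean document; each statement's English description precedes it below -/
import Mathlib

section
/- Let Y and Z be real vector spaces, R : Y → Z a linear map, N ≥ 1 an integer, ℓ₁, …, ℓ_N : Y → ℝ linear functionals, and s : Z → ℝ a linear functional such that Σ_{i=1}^{N} ℓᵢ(ψ) = s(R ψ) for all ψ ∈ Y. Assume that for every (μ₁, …, μ_N) ∈ ℝ^N there exists g ∈ Y with R g = 0 and ℓᵢ(g) = μ_{i+1} − μᵢ for i = 1, …, N, where μ_{N+1} := μ₁. Then for every r in the range of R and every ω ∈ ℝ^N satisfying Σ_{i=1}^{N} ωᵢ = s(r), there exists θ ∈ Y with R θ = r and ℓᵢ(θ) = ωᵢ for i = 1, …, N. -/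
/-- Abstract form of Lemma 4.1 (invertibility of `rot` with prescribed boundary
averages): `R` plays the role of `rot`, `ℓ i` of the tangential boundary
averages, `s` of integration over `Ω`, and the hypothesis `hA1` abstracts
assumption (A1); indices are cyclic, so `μ (i+1)` for `i = N-1` is `μ 0`. -/
theorem stmt_2
    {Y Z : Type*} [AddCommGroup Y] [Module ℝ Y] [AddCommGroup Z] [Module ℝ Z]
    (N : ℕ) [NeZero N] (hN : 1 ≤ N)
    (R : Y →ₗ[ℝ] Z) (ℓ : Fin N → (Y →ₗ[ℝ] ℝ)) (s : Z →ₗ[ℝ] ℝ)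
    (hStokes : ∀ ψ : Y, ∑ i, ℓ i ψ = s (R ψ))
    (hA1 : ∀ μ : Fin N → ℝ, ∃ g : Y, R g = 0 ∧ ∀ i, ℓ i g = μ (i + 1) - μ i) :
    ∀ r ∈ LinearMap.range R, ∀ ω : Fin N → ℝ, (∑ i, ω i) = s r →
      ∃ θ : Y, R θ = r ∧ ∀ i, ℓ i θ = ω i := by
  rintro r ⟨ψ₀, rfl⟩ ω hsum
  set d : Fin N → ℝ := fun i => ω i - ℓ i ψ₀ with hd
  have hdsum : ∑ i, d i = 0 := by
    simp only [hd, Finset.sum_sub_distrib, hsum, hStokes ψ₀, sub_self]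
  set d' : ℕ → ℝ := fun n => if h : n < N then d ⟨n, h⟩ else 0 with hd'
  have hdsum' : ∑ j ∈ Finset.range N, d' j = 0 := by
    rw [← hdsum, ← Fin.sum_univ_eq_sum_range]
    exact Finset.sum_congr rfl fun i _ => by simp [hd', i.isLt]
  set μ : Fin N → ℝ := fun i => ∑ j ∈ Finset.range i.val, d' j with hμ
  have key : ∀ i : Fin N, μ (i + 1) - μ i = d i := by
    intro i
    by_cases h : i.val + 1 < N
    · have hv : ((i + 1 : Fin N)).val = i.val + 1 := by
        simp [Fin.add_def, Nat.mod_eq_of_lt h]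
      rw [hμ]
      simp only [hv, Finset.sum_range_succ]
      simp [hd', i.isLt]
    · have hlast : i.val = N - 1 := by omega
      have hv : ((i + 1 : Fin N)).val = 0 := by
        simp [Fin.add_def, hlast, Nat.sub_add_cancel hN]
      have hNsucc : N = (N - 1) + 1 := by omega
      have : μ i = - d i := by
        have := hdsum'
        rw [hNsucc, Finset.sum_range_succ] at this
        have hdi : d' (N - 1) = d i := by
          have : (⟨N - 1, by omega⟩ : Fin N) = i := by
            ext; simp [hlast]
          simp [hd', show N - 1 < N by omega, this]
        rw [hμ]; simp only [hlast]
        linarith [this, hdi]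
      rw [hμ] at this ⊢
      simp only [hv, Finset.range_zero, Finset.sum_empty]
      linarith
  obtain ⟨g, hg0, hgℓ⟩ := hA1 μ
  refine ⟨ψ₀ + g, by simp [hg0], fun i => ?_⟩
  have := hgℓ i
  rw [key i] at this
  simp only [map_add, this, hd]
  ring
end

section
/- Let Y, Z, W, and H̃ be finite-dimensional real inner product spaces, R : Y → Z a surjective linear map, G : W → Y an injective linear map with range(G) = ker(R), G̃ : H̃ → Y an injective linear map, and J : W → H̃ a linear map with G̃ ∘ J = G. Let a : Y × Y → ℝ be a bilinear form with a(θ,θ) ≥ 0 for all θ ∈ Y and a(G w, G w) ≥ α‖w‖_W² for all w ∈ W, for some α > 0. Then for every linear functional F : H̃ → ℝ there exists a unique quadruple (z̃, θ, r, w̃) ∈ H̃ × Y × Z × H̃ satisfying: (i) ⟨G̃ z̃, G̃ v⟩_Y = F(v) for all v ∈ H̃; (ii) a(θ, ψ) + ⟨R ψ, r⟩_Z = ⟨G̃ z̃, ψ⟩_Y for all ψ ∈ Y, and ⟨R θ, s⟩_Z = 0 for all s ∈ Z; (iii) ⟨G̃ w̃, G̃ v⟩_Y = ⟨θ, G̃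 v⟩_Y for all v ∈ H̃. Moreover G̃ w̃ = θ and w̃ = J w_X, where w_X is the unique element of W satisfying a(G w_X, G v) = F(J v) for all v ∈ W. -/
open scoped RealInnerProductSpace

/-!
Coercivity makes the Galerkin problem `a(G w, G v) = F(J v)` on `W` uniquely solvable. For its
solution `w_X`, `θ := G w_X` lies in `ker R`, and the residual `ψ ↦ ⟪G̃ z̃, ψ⟫ - a(θ, ψ)` vanishes
on `ker R = range G`; it therefore factors through the surjection `R`, and its Riesz
representative in `Z` is the multiplier `r`. Since `G̃ ∘ J = G`, step (iii) is solved by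
`w̃ = J w_X`. Conversely, testing (ii) with `ψ ∈ ker R = range G` shows that any solution has
`θ = G w` with `w` a Galerkin solution, hence `w = w_X`. Uniqueness of `z̃` and `w̃` comes from
`⟪G̃ ·, G̃ ·⟫` being an inner product on `H̃`, and that of `r` from the surjectivity of `R`.
-/

open Function

section Representation

variable {K V : Type*} [Field K] [AddCommGroup V] [Module K V] [FiniteDimensional K V]

theorem LinearMap.bijective_of_anisotropic (B : V →ₗ[K] V →ₗ[K] K)
    (hB : ∀ x, B x x = 0 → x = 0) : Bijective B := by
  have hinj : Injective B := by
    rw [← LinearMap.ker_eq_bot, LinearMap.ker_eq_bot']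
    intro x hx
    exact hB x (by rw [hx, LinearMap.zero_apply])
  exact ⟨hinj,
    (LinearMap.injective_iff_surjective_of_finrank_eq_finrank Subspace.dual_finrank_eq.symm).1 hinj⟩

theorem LinearMap.existsUnique_apply_eq_of_anisotropic (B : V →ₗ[K] V →ₗ[K] K)
    (hB : ∀ x, B x x = 0 → x = 0) (f : Module.Dual K V) : ∃! x, ∀ v, B x v = f v := by
  simpa only [LinearMap.ext_iff] using (B.bijective_of_anisotropic hB).existsUnique f

end Representation

theorem LinearMap.exists_comp_eq_of_ker_le {S M N P : Type*} [Ring S] [AddCommGroup M]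
    [Module S M] [AddCommGroup N] [Module S N] [AddCommGroup P] [Module S P]
    {g : M →ₗ[S] N} (hg : Surjective g) (f : M →ₗ[S] P) (h : ker g ≤ ker f) :
    ∃ f' : N →ₗ[S] P, f' ∘ₗ g = f :=
  ⟨(ker g).liftQ f h ∘ₗ (g.quotKerEquivOfSurjective hg).symm.toLinearMap, by
    ext x
    simp⟩

section InnerProduct

variable {H Y Z : Type*} [AddCommGroup H] [Module ℝ H]
  [NormedAddCommGroup Y] [InnerProductSpace ℝ Y] [NormedAddCommGroup Z] [InnerProductSpace ℝ Z]

theorem existsUnique_inner_map_map_eq [FiniteDimensional ℝ H] {T : H →ₗ[ℝ] Y}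
    (hT : Injective T) (f : H →ₗ[ℝ] ℝ) : ∃! z, ∀ v, ⟪T z, T v⟫ = f v :=
  ((innerₗ Y).compl₁₂ T T).existsUnique_apply_eq_of_anisotropic
    (fun z hz => hT <| by simpa using hz) f

theorem eq_of_inner_map_map_eq [FiniteDimensional ℝ H] {T : H →ₗ[ℝ] Y} (hT : Injective T)
    {z₁ z₂ : H} (h : ∀ v, ⟪T z₁, T v⟫ = ⟪T z₂, T v⟫) : z₁ = z₂ :=
  (existsUnique_inner_map_map_eq hT ((innerₗ Y (T z₂)).comp T)).unique h fun _ => rfl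

theorem exists_inner_map_eq_of_ker_le [FiniteDimensional ℝ Z] {R : Y →ₗ[ℝ] Z}
    (hR : Surjective R) (ℓ : Y →ₗ[ℝ] ℝ) (h : LinearMap.ker R ≤ LinearMap.ker ℓ) :
    ∃ r : Z, ∀ ψ, ⟪R ψ, r⟫ = ℓ ψ := by
  obtain ⟨g, rfl⟩ := LinearMap.exists_comp_eq_of_ker_le hR ℓ h
  obtain ⟨r, hr, -⟩ := (innerₗ Z).existsUnique_apply_eq_of_anisotropic
    (fun _ => inner_self_eq_zero.1) g
  exact ⟨r, fun ψ => (real_inner_comm _ _).trans (hr (R ψ))⟩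

theorem eq_of_inner_map_eq {R : Y →ₗ[ℝ] Z} (hR : Surjective R) {r₁ r₂ : Z}
    (h : ∀ ψ, ⟪R ψ, r₁⟫ = ⟪R ψ, r₂⟫) : r₁ = r₂ :=
  ext_inner_left ℝ fun s => by
    obtain ⟨ψ, rfl⟩ := hR s
    exact h ψ

end InnerProduct

theorem existsUnique_galerkin {W Y : Type*} [NormedAddCommGroup W] [NormedSpace ℝ W]
    [FiniteDimensional ℝ W] [AddCommGroup Y] [Module ℝ Y] (a : Y →ₗ[ℝ] Y →ₗ[ℝ] ℝ)
    (G : W →ₗ[ℝ] Y) {α : ℝ} (hα : 0 < α) (ha : ∀ w, α * ‖w‖ ^ 2 ≤ a (G w) (G w))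
    (f : W →ₗ[ℝ] ℝ) : ∃! w, ∀ v, a (G w) (G v) = f v := by
  refine (a.compl₁₂ G G).existsUnique_apply_eq_of_anisotropic (fun w hw => ?_) f
  have hw : α * ‖w‖ ^ 2 ≤ 0 := hw ▸ ha w
  simpa using nonpos_of_mul_nonpos_right hw hα

section ThreeStep

variable {Y Z W Ht : Type*} [NormedAddCommGroup Y] [InnerProductSpace ℝ Y]
  [NormedAddCommGroup Z] [InnerProductSpace ℝ Z] [AddCommGroup W] [Module ℝ W]
  [AddCommGroup Ht] [Module ℝ Ht] {R : Y →ₗ[ℝ] Z} {G : W →ₗ[ℝ] Y} {Gt : Ht →ₗ[ℝ] Y}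
  {J : W →ₗ[ℝ] Ht} {a : Y →ₗ[ℝ] Y →ₗ[ℝ] ℝ} {F : Ht →ₗ[ℝ] ℝ}

theorem exists_galerkin_of_three_step [FiniteDimensional ℝ Ht] (hGt : Injective Gt)
    (hexact : LinearMap.range G = LinearMap.ker R) (hGJ : ∀ w, Gt (J w) = G w)
    {zt : Ht} {θ : Y} {r : Z} {wt : Ht}
    (hzt : ∀ v, ⟪Gt zt, Gt v⟫ = F v) (hθ : ∀ ψ, a θ ψ + ⟪R ψ, r⟫ = ⟪Gt zt, ψ⟫)
    (hRθ : ∀ s, ⟪R θ, s⟫ = 0) (hwt : ∀ v, ⟪Gt wt, Gt v⟫ = ⟪θ, Gt v⟫) :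
    ∃ w, (∀ v, a (G w) (G v) = F (J v)) ∧ G w = θ ∧ wt = J w := by
  obtain ⟨w, rfl⟩ : θ ∈ LinearMap.range G := hexact ▸ inner_self_eq_zero.1 (hRθ _)
  refine ⟨w, fun v => ?_, rfl, eq_of_inner_map_map_eq hGt fun v => by rw [hwt, hGJ]⟩
  have hRG : R (G v) = 0 := by rw [← LinearMap.mem_ker, ← hexact]; exact ⟨v, rfl⟩
  have := hθ (G v)
  rw [hRG, inner_zero_left, add_zero] at this
  rw [this, ← hGJ, hzt]

theorem exists_stokes_multiplier [FiniteDimensional ℝ Z] (hR : Surjective R)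
    (hexact : LinearMap.range G = LinearMap.ker R) (hGJ : ∀ w, Gt (J w) = G w) {zt : Ht} {wX : W}
    (hzt : ∀ v, ⟪Gt zt, Gt v⟫ = F v) (hwX : ∀ v, a (G wX) (G v) = F (J v)) :
    ∃ r, ∀ ψ, a (G wX) ψ + ⟪R ψ, r⟫ = ⟪Gt zt, ψ⟫ := by
  obtain ⟨r, hr⟩ := exists_inner_map_eq_of_ker_le hR (innerₗ Y (Gt zt) - a (G wX)) <| by
    rw [← hexact]
    rintro _ ⟨v, rfl⟩
    rw [LinearMap.mem_ker, LinearMap.sub_apply, innerₗ_apply_apply, hwX, ← hGJ, hzt, sub_self]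
  refine ⟨r, fun ψ => ?_⟩
  rw [hr, LinearMap.sub_apply, innerₗ_apply_apply]
  ring

end ThreeStep

theorem stmt_4_general
    {Y Z W Ht : Type*}
    [NormedAddCommGroup Y] [InnerProductSpace ℝ Y]
    [NormedAddCommGroup Z] [InnerProductSpace ℝ Z] [FiniteDimensional ℝ Z]
    [NormedAddCommGroup W] [InnerProductSpace ℝ W] [FiniteDimensional ℝ W]
    [NormedAddCommGroup Ht] [InnerProductSpace ℝ Ht] [FiniteDimensional ℝ Ht]
    (R : Y →ₗ[ℝ] Z) (hR : Function.Surjective R)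
    (G : W →ₗ[ℝ] Y)
    (hexact : LinearMap.range G = LinearMap.ker R)
    (Gt : Ht →ₗ[ℝ] Y) (hGt : Function.Injective Gt)
    (J : W →ₗ[ℝ] Ht) (hJ : Gt.comp J = G)
    (a : Y →ₗ[ℝ] Y →ₗ[ℝ] ℝ) (α : ℝ) (hα : 0 < α)
    (ha_coer : ∀ w : W, α * ‖w‖ ^ 2 ≤ a (G w) (G w))
    (F : Ht →ₗ[ℝ] ℝ) :
    (∃! q : Ht × Y × Z × Ht,
        (∀ v : Ht, ⟪Gt q.1, Gt v⟫ = F v) ∧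
        (∀ ψ : Y, a q.2.1 ψ + ⟪R ψ, q.2.2.1⟫ = ⟪Gt q.1, ψ⟫) ∧
        (∀ s : Z, ⟪R q.2.1, s⟫ = 0) ∧
        (∀ v : Ht, ⟪Gt q.2.2.2, Gt v⟫ = ⟪q.2.1, Gt v⟫)) ∧
    (∃! wX : W, ∀ v : W, a (G wX) (G v) = F (J v)) ∧
    (∀ (zt : Ht) (θ : Y) (r : Z) (wt : Ht),
      (∀ v : Ht, ⟪Gt zt, Gt v⟫ = F v) →
      (∀ ψ : Y, a θ ψ + ⟪R ψ, r⟫ = ⟪Gt zt, ψ⟫) →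
      (∀ s : Z, ⟪R θ, s⟫ = 0) →
      (∀ v : Ht, ⟪Gt wt, Gt v⟫ = ⟪θ, Gt v⟫) →
      Gt wt = θ ∧
        ∀ wX : W, (∀ v : W, a (G wX) (G v) = F (J v)) → wt = J wX) := by
  have hGJ (w : W) : Gt (J w) = G w := LinearMap.congr_fun hJ w
  obtain ⟨wX, hwX, hwX_unique⟩ := existsUnique_galerkin a G hα ha_coer (F ∘ₗ J)
  obtain ⟨zt, hzt, hzt_unique⟩ := existsUnique_inner_map_map_eq hGt F
  obtain ⟨r, hr⟩ := exists_stokes_multiplier hR hexact hGJ hzt hwX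
  have hRG : R (G wX) = 0 := by rw [← LinearMap.mem_ker, ← hexact]; exact ⟨wX, rfl⟩
  refine ⟨⟨(zt, G wX, r, J wX), ⟨hzt, hr, fun s => by rw [hRG, inner_zero_left],
    fun v => by rw [hGJ]⟩, ?_⟩, ⟨wX, hwX, hwX_unique⟩, fun z θ ρ w₀ hz hθ hRθ hw₀ => ?_⟩
  · rintro ⟨zt', θ', r', wt'⟩ ⟨hzt', hθ', hRθ', hwt'⟩
    obtain rfl := hzt_unique zt' hzt'
    obtain ⟨w, hw, rfl, rfl⟩ := exists_galerkin_of_three_step hGt hexact hGJ hzt' hθ' hRθ' hwt'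
    obtain rfl := hwX_unique w hw
    obtain rfl : r' = r := eq_of_inner_map_eq hR fun ψ => by linarith [hθ' ψ, hr ψ]
    rfl
  · obtain ⟨w, hw, rfl, rfl⟩ := exists_galerkin_of_three_step hGt hexact hGJ hz hθ hRθ hw₀
    exact ⟨hGJ w, fun wX' hwX' => by rw [hwX_unique w hw, hwX_unique wX' hwX']⟩

/-- Abstract form of Lemma 3.1 (correctness of the three-step algorithm when
`Γ_cs` is connected): the pre-processing solve (i), the Stokes-like system (ii),
and the post-processing projection (iii) have a unique solution, the recovered
`w̃` satisfies `G̃ w̃ = θ`, and `w̃ = J w_X` where `w_X` is the unique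
`H²`-conforming Galerkin solution. -/
theorem stmt_4
    {Y Z W Ht : Type*}
    [NormedAddCommGroup Y] [InnerProductSpace ℝ Y] [FiniteDimensional ℝ Y]
    [NormedAddCommGroup Z] [InnerProductSpace ℝ Z] [FiniteDimensional ℝ Z]
    [NormedAddCommGroup W] [InnerProductSpace ℝ W] [FiniteDimensional ℝ W]
    [NormedAddCommGroup Ht] [InnerProductSpace ℝ Ht] [FiniteDimensional ℝ Ht]
    (R : Y →ₗ[ℝ] Z) (hR : Function.Surjective R)
    (G : W →ₗ[ℝ] Y) (hG : Function.Injective G)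
    (hexact : LinearMap.range G = LinearMap.ker R)
    (Gt : Ht →ₗ[ℝ] Y) (hGt : Function.Injective Gt)
    (J : W →ₗ[ℝ] Ht) (hJ : Gt.comp J = G)
    (a : Y →ₗ[ℝ] Y →ₗ[ℝ] ℝ) (α : ℝ) (hα : 0 < α)
    (ha_pos : ∀ θ : Y, 0 ≤ a θ θ)
    (ha_coer : ∀ w : W, α * ‖w‖ ^ 2 ≤ a (G w) (G w))
    (F : Ht →ₗ[ℝ] ℝ) :
    (∃! q : Ht × Y × Z × Ht,
        (∀ v : Ht, ⟪Gt q.1, Gt v⟫ = F v) ∧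
        (∀ ψ : Y, a q.2.1 ψ + ⟪R ψ, q.2.2.1⟫ = ⟪Gt q.1, ψ⟫) ∧
        (∀ s : Z, ⟪R q.2.1, s⟫ = 0) ∧
        (∀ v : Ht, ⟪Gt q.2.2.2, Gt v⟫ = ⟪q.2.1, Gt v⟫)) ∧
    (∃! wX : W, ∀ v : W, a (G wX) (G v) = F (J v)) ∧
    (∀ (zt : Ht) (θ : Y) (r : Z) (wt : Ht),
      (∀ v : Ht, ⟪Gt zt, Gt v⟫ = F v) →
      (∀ ψ : Y, a θ ψ + ⟪R ψ, r⟫ = ⟪Gt zt, ψ⟫) →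
      (∀ s : Z, ⟪R θ, s⟫ = 0) →
      (∀ v : Ht, ⟪Gt wt, Gt v⟫ = ⟪θ, Gt v⟫) →
      Gt wt = θ ∧
        ∀ wX : W, (∀ v : W, a (G wX) (G v) = F (J v)) → wt = J wX) :=
  stmt_4_general R hR G hexact Gt hGt J hJ a α hα ha_coer F
end

section
/- Let Y, Z, and W be finite-dimensional real inner product spaces, R : Y → Z a linear map, N ≥ 1 an integer, ℓ : Y → ℝ^{N−1} a linear map, and G : W → Y an injective linear map with range(G) = ker(R); set W₀ := {w ∈ W : ℓ(G w) = 0}. Let a : Y × Y → ℝ be a bilinear form with a(θ,θ) ≥ 0 for all θ ∈ Y and a(G w, G w) ≥ α‖w‖_W² for all w ∈ W₀, for some α > 0. Define b(θ,ψ) := ⟨R θ, R ψ⟩_Z + Σ_{i=1}^{N−1} (ℓ θ)ᵢ (ℓ ψ)ᵢ and, for λ > 0, a_λ := a + λ b. Then for every λ > 0, if θ ∈ Y satisfies a_λ(θ, ψ) = 0 for all ψ ∈ Y, then θ = 0; consequently, for each y ∈ Y the linear system a_λ(θ, ψ) = ⟨y, ψ⟩_Y for all ψ ∈ Y has a unique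 solution θ ∈ Y. -/
open scoped RealInnerProductSpace

/-- Well-definedness part of Lemma 5.1: the penalized bilinear form
`a_λ = a + λ b` of the iterated penalty method is nondegenerate for every
`λ > 0`, so each linear system `a_λ(θ, ψ) = ⟪y, ψ⟫ ∀ψ` has a unique solution. -/
theorem stmt_7
    {Y Z W : Type*}
    [NormedAddCommGroup Y] [InnerProductSpace ℝ Y] [FiniteDimensional ℝ Y]
    [NormedAddCommGroup Z] [InnerProductSpace ℝ Z] [FiniteDimensional ℝ Z]
    [NormedAddCommGroup W] [InnerProductSpace ℝ W] [FiniteDimensional ℝ W]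
    (N : ℕ) (hN : 1 ≤ N)
    (R : Y →ₗ[ℝ] Z) (ℓ : Y →ₗ[ℝ] (Fin (N - 1) → ℝ))
    (G : W →ₗ[ℝ] Y) (hG : Function.Injective G)
    (hexact : LinearMap.range G = LinearMap.ker R)
    (a : Y →ₗ[ℝ] Y →ₗ[ℝ] ℝ) (α : ℝ) (hα : 0 < α)
    (ha_pos : ∀ θ : Y, 0 ≤ a θ θ)
    (ha_coer : ∀ w : W, ℓ (G w) = 0 → α * ‖w‖ ^ 2 ≤ a (G w) (G w))
    (b : Y → Y → ℝ)
    (hb : ∀ θ ψ : Y, b θ ψ = ⟪R θ, R ψ⟫ + ∑ i, ℓ θ i * ℓ ψ i)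
    (lam : ℝ) (hlam : 0 < lam) :
    (∀ θ : Y, (∀ ψ : Y, a θ ψ + lam * b θ ψ = 0) → θ = 0) ∧
    (∀ y : Y, ∃! θ : Y, ∀ ψ : Y, a θ ψ + lam * b θ ψ = ⟪y, ψ⟫) := by
  classical
  -- bilinear version of b
  set Bf : Y →ₗ[ℝ] Y →ₗ[ℝ] ℝ := LinearMap.mk₂ ℝ
    (fun θ ψ => ⟪R θ, R ψ⟫ + ∑ i, ℓ θ i * ℓ ψ i)
    (by
      intro m m' n
      simp [map_add, inner_add_left, add_mul, Finset.sum_add_distrib]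
      ring)
    (by
      intro c m n
      simp [map_smul, real_inner_smul_left, mul_add, Finset.mul_sum, mul_assoc])
    (by
      intro m n n'
      simp [map_add, inner_add_right, mul_add, Finset.sum_add_distrib]
      ring)
    (by
      intro c m n
      simp [map_smul, real_inner_smul_right, mul_add, Finset.mul_sum]
      ring_nf
      simp [mul_assoc, mul_comm, mul_left_comm])
  have hBf : ∀ θ ψ, Bf θ ψ = b θ ψ := by
    intro θ ψ; rw [hb]; rfl
  set T : Y →ₗ[ℝ] (Y →ₗ[ℝ] ℝ) := a + lam • Bf with hT
  have hTapp : ∀ θ ψ, T θ ψ = a θ ψ + lam * b θ ψ := by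
    intro θ ψ; simp [hT, hBf θ ψ]
  -- part 1
  have key : ∀ θ : Y, (∀ ψ : Y, a θ ψ + lam * b θ ψ = 0) → θ = 0 := by
    intro θ hθ
    have h0 := hθ θ
    rw [hb] at h0
    have h1 : (0:ℝ) ≤ ⟪R θ, R θ⟫ := real_inner_self_nonneg
    have h2 : (0:ℝ) ≤ ∑ i, ℓ θ i * ℓ θ i :=
      Finset.sum_nonneg fun i _ => mul_self_nonneg _
    have hbnn : (0:ℝ) ≤ ⟪R θ, R θ⟫ + ∑ i, ℓ θ i * ℓ θ i := by linarith
    have hbpos : (0:ℝ) ≤ lam * (⟪R θ, R θ⟫ + ∑ i, ℓ θ i * ℓ θ i) :=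
      mul_nonneg hlam.le hbnn
    have ha0 : a θ θ = 0 := le_antisymm (by linarith [ha_pos θ]) (ha_pos θ)
    have hb0 : ⟪R θ, R θ⟫ + ∑ i, ℓ θ i * ℓ θ i = 0 := by
      have := mul_left_cancel₀ (ne_of_gt hlam) (by linarith : lam * (⟪R θ, R θ⟫ + ∑ i, ℓ θ i * ℓ θ i) = lam * 0)
      simpa using this
    have hR0 : R θ = 0 := by
      have h3 : ⟪R θ, R θ⟫ = 0 := by linarith
      exact (inner_self_eq_zero (𝕜 := ℝ)).mp h3
    have hsum0 : ∑ i, ℓ θ i * ℓ θ i = 0 := by linarith [hb0, real_inner_self_nonneg (x := R θ)]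
    have hℓ0 : ℓ θ = 0 := by
      funext i
      have hi : ℓ θ i * ℓ θ i = 0 := by
        have := (Finset.sum_eq_zero_iff_of_nonneg (fun j _ => mul_self_nonneg (ℓ θ j))).mp hsum0 i (Finset.mem_univ i)
        exact this
      have := mul_self_eq_zero.mp hi
      simpa using this
    -- θ ∈ ker R = range G
    have hmem : θ ∈ LinearMap.range G := by
      rw [hexact]; exact hR0
    obtain ⟨w, hw⟩ := hmem
    have hℓGw : ℓ (G w) = 0 := by rw [hw]; exact hℓ0
    have hcoer := ha_coer w hℓGw
    rw [← hw] at ha0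
    rw [← hw]
    rw [ha0] at hcoer
    have h5 : 0 ≤ α * ‖w‖ ^ 2 := mul_nonneg hα.le (by positivity)
    have h6 : α * ‖w‖ ^ 2 = 0 := le_antisymm hcoer h5
    have h7 : ‖w‖ ^ 2 = 0 := by
      rcases mul_eq_zero.mp h6 with h | h
      · exact absurd h hα.ne'
      · exact h
    have hwz : w = 0 := by
      have h8 : ‖w‖ = 0 := by
        have := pow_eq_zero_iff (n := 2) (two_ne_zero) |>.mp h7
        exact this
      exact norm_eq_zero.mp h8
    rw [hwz, map_zero]
  refine ⟨key, ?_⟩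
  -- T injective
  have hTinj : Function.Injective T := by
    rw [← LinearMap.ker_eq_bot, LinearMap.ker_eq_bot']
    intro θ hθ
    apply key θ
    intro ψ
    rw [← hTapp]
    simp [hθ]
  have hdim : Module.finrank ℝ Y = Module.finrank ℝ (Y →ₗ[ℝ] ℝ) := by
    rw [Module.finrank_linearMap, Module.finrank_self, mul_one]
  have hTsurj : Function.Surjective T :=
    (LinearMap.injective_iff_surjective_of_finrank_eq_finrank hdim).mp hTinj
  intro y
  obtain ⟨θ, hθ⟩ := hTsurj
    { toFun := fun ψ => ⟪y, ψ⟫,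
      map_add' := fun x z => inner_add_right y x z,
      map_smul' := fun c x => by simp [real_inner_smul_right] }
  refine ⟨θ, ?_, ?_⟩
  · intro ψ
    rw [← hTapp, hθ]
    rfl
  · intro θ' hθ'
    have : ∀ ψ, a (θ' - θ) ψ + lam * b (θ' - θ) ψ = 0 := by
      intro ψ
      have e1 : T θ' ψ = ⟪y, ψ⟫ := by rw [hTapp]; exact hθ' ψ
      have e2 : T θ ψ = ⟪y, ψ⟫ := by rw [hθ]; rfl
      have : T (θ' - θ) ψ = 0 := by
        rw [map_sub, LinearMap.sub_apply, e1, e2, sub_self]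
      rwa [hTapp] at this
    have := key _ this
    exact sub_eq_zero.mp this
end
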